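/- arXiv:hep-th/9701078 — 5 statements merged into one kernel-verified Lean document; each statement's English description precedes it below -/
import Mathlib

section
/- If M : P → Q and its composites satisfy the inverse-limit coherence, then in an inverse system of finitary T₀ quotients of a topological space M, the canonical map π∞ : M → P∞ has dense image: the image of M is dense in the inverse limit P∞. -/
/-- In an inverse system of finitary T₀ quotients of a topological space `M`, with
continuous surjections `π_n : M → P n` compatible with the connecting maps `p i j`,
the canonical map `π∞ : M → P∞` into the inverse limit has dense image. -/
theorem inverse_limit_dense_image {M : Type*} [TopologicalSpace M]
    {P : ℕ → Type*} [∀ n, TopologicalSpace (P n)] [∀ n, T0Space (P n)]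
    (π : ∀ n, M → P n)
    (hcont : ∀ n, Continuous (π n))
    (hsurj : ∀ n, Function.Surjective (π n))
    (p : ∀ i j : ℕ, i ≤ j → P j → P i)
    (hpcont : ∀ (i j : ℕ) (h : i ≤ j), Continuous (p i j h))
    (hcoh : ∀ (i j : ℕ) (h : i ≤ j) (m : M), p i j h (π j m) = π i m) :
    Dense (Set.range fun m : M =>
      (⟨fun n => π n m, fun i j h => hcoh i j h m⟩ :
        {x : ∀ n, P n // ∀ (i j : ℕ) (h : i ≤ j), p i j h (x j) = x i})) := by
  rw [dense_iff_inter_open]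
  rintro U hU ⟨x, hxU⟩
  obtain ⟨V, hV, rfl⟩ := isOpen_induced_iff.mp hU
  obtain ⟨I, u, hIu, hsub⟩ := isOpen_pi_iff.mp hV x.1 hxU
  set n := I.sup id with hn
  obtain ⟨m, hm⟩ := hsurj n (x.1 n)
  have key : ∀ i ∈ I, π i m = x.1 i := by
    intro i hi
    have hin : i ≤ n := Finset.le_sup (f := id) hi
    calc π i m = p i n hin (π n m) := (hcoh i n hin m).symm
      _ = p i n hin (x.1 n) := by rw [hm]
      _ = x.1 i := x.2 i n hin
  refine ⟨⟨fun k => π k m, fun i j h => hcoh i j h m⟩, ?_, ⟨m, rfl⟩⟩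
  exact hsub fun i hi => by show π i m ∈ u i; rw [key i hi]; exact (hIu i hi).2
end

section
/- If M is T₀ and the covers are fine enough (for every point m and every neighborhood N of m there exist an index i and U ∈ τ(U_i) with m ∈ U ⊆ N), then the canonical map π∞ : M → P∞ into the inverse limit of the finitary quotients is injective. -/
theorem inseparable_of_forall_mem_iff {ι M : Type*} [TopologicalSpace M]
    (t : ι → TopologicalSpace M)
    (hfine : ∀ (m : M) (N : Set M), IsOpen N → m ∈ N →
      ∃ (i : ι) (U : Set M), (t i).IsOpen U ∧ m ∈ U ∧ U ⊆ N)
    {m m' : M} (h : ∀ (i : ι) (U : Set M), (t i).IsOpen U → (m ∈ U ↔ m' ∈ U)) :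
    Inseparable m m' := by
  refine inseparable_iff_forall_isOpen.2 fun N hN => ⟨fun hm => ?_, fun hm' => ?_⟩
  · obtain ⟨i, U, hU, hmU, hUN⟩ := hfine m N hN hm
    exact hUN ((h i U hU).1 hmU)
  · obtain ⟨i, U, hU, hm'U, hUN⟩ := hfine m' N hN hm'
    exact hUN ((h i U hU).2 hm'U)

theorem inverse_limit_injective_general {M : Type*} [TopologicalSpace M] [T0Space M]
    (t : ℕ → TopologicalSpace M)
    {P : ℕ → Type*}
    (π : ∀ n, M → P n)
    (hquot : ∀ (n : ℕ) (m m' : M),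
      π n m = π n m' ↔ ∀ U : Set M, (t n).IsOpen U → (m ∈ U ↔ m' ∈ U))
    (p : ∀ i j : ℕ, i ≤ j → P j → P i)
    (hcoh : ∀ (i j : ℕ) (h : i ≤ j) (m : M), p i j h (π j m) = π i m)
    (hfine : ∀ (m : M) (N : Set M), IsOpen N → m ∈ N →
      ∃ (i : ℕ) (U : Set M), (t i).IsOpen U ∧ m ∈ U ∧ U ⊆ N) :
    Function.Injective fun m : M =>
      (⟨fun n => π n m, fun i j h => hcoh i j h m⟩ :
        {x : ∀ n, P n // ∀ (i j : ℕ) (h : i ≤ j), p i j h (x j) = x i}) := by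
  intro m m' h
  have hπ : ∀ n, π n m = π n m' := fun n => congrFun (congrArg Subtype.val h) n
  exact (inseparable_of_forall_mem_iff t hfine fun n => (hquot n m m').1 (hπ n)).eq

/-- If `M` is T₀ and the covers are fine enough (for every point `m` and neighbourhood `N`
of `m` there are an index `i` and a `τ(U_i)`-open set `U` with `m ∈ U ⊆ N`), then the
canonical map `π∞ : M → P∞` into the inverse limit of the finitary T₀ quotients is
injective. -/
theorem inverse_limit_injective {M : Type*} [TopologicalSpace M] [T0Space M]
    (t : ℕ → TopologicalSpace M)
    (hcoarser : ∀ (n : ℕ) (U : Set M), (t n).IsOpen U → IsOpen U)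
    {P : ℕ → Type*} [∀ n, TopologicalSpace (P n)] [∀ n, T0Space (P n)]
    (π : ∀ n, M → P n)
    (hquot : ∀ (n : ℕ) (m m' : M),
      π n m = π n m' ↔ ∀ U : Set M, (t n).IsOpen U → (m ∈ U ↔ m' ∈ U))
    (p : ∀ i j : ℕ, i ≤ j → P j → P i)
    (hcoh : ∀ (i j : ℕ) (h : i ≤ j) (m : M), p i j h (π j m) = π i m)
    (hfine : ∀ (m : M) (N : Set M), IsOpen N → m ∈ N →
      ∃ (i : ℕ) (U : Set M), (t i).IsOpen U ∧ m ∈ U ∧ U ⊆ N) :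
    Function.Injective fun m : M =>
      (⟨fun n => π n m, fun i j h => hcoh i j h m⟩ :
        {x : ∀ n, P n // ∀ (i j : ℕ) (h : i ≤ j), p i j h (x j) = x i}) :=
  inverse_limit_injective_general t π hquot p hcoh hfine
end

section
/- A right module E over a unital ring A admits a connection relative to the universal differential calculus (a linear map ∇ : E → E ⊗_A Ω¹A with ∇(ηa) = (∇η)a + η ⊗ δa) if and only if E is projective. -/
open scoped TensorProduct

variable {A : Type*} [Ring A] [Algebra ℂ A]
variable {E : Type*} [AddCommGroup E] [Module ℂ E] [Module Aᵐᵒᵖ E]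
  [SMulCommClass ℂ Aᵐᵒᵖ E] [IsScalarTower ℂ Aᵐᵒᵖ E]

/-- The multiplication map `m : E ⊗[ℂ] A → E`, `η ⊗ a ↦ η·a`.  Its kernel is the canonical
realization of `E ⊗_A Ω¹A` inside `E ⊗_ℂ A` (via `j(η δa) = η ⊗ a - ηa ⊗ 1`). -/
noncomputable def actMap : E ⊗[ℂ] A →ₗ[ℂ] E :=
  TensorProduct.lift
    (LinearMap.mk₂ ℂ (fun η a => MulOpposite.op a • η)
      (fun m₁ m₂ n => smul_add (MulOpposite.op n) m₁ m₂)
      (fun c m n => (smul_comm c (MulOpposite.op n) m).symm)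
      (fun m n₁ n₂ => by simp only [MulOpposite.op_add, add_smul])
      (fun c m n => by simp only [MulOpposite.op_smul, smul_assoc]))

/-- Right multiplication by `a ∈ A` on `E ⊗[ℂ] A` (acting on the second leg). -/
noncomputable def rmulT (a : A) : E ⊗[ℂ] A →ₗ[ℂ] E ⊗[ℂ] A :=
  LinearMap.lTensor E (LinearMap.mulRight ℂ a)

/-- A (universal) connection on the right `A`-module `E`: a `ℂ`-linear map
`∇ : E → E ⊗_A Ω¹A ⊆ E ⊗_ℂ A` satisfying the Leibniz rule
`∇(ηa) = (∇η)·a + η ⊗ δa`, where `η ⊗ δa` is realized as `η ⊗ a - ηa ⊗ 1`. -/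
def IsConnection (Nab : E →ₗ[ℂ] E ⊗[ℂ] A) : Prop :=
  (∀ η : E, actMap (Nab η) = 0) ∧
  ∀ (η : E) (a : A),
    Nab (MulOpposite.op a • η) =
      rmulT a (Nab η) + (η ⊗ₜ[ℂ] a - (MulOpposite.op a • η) ⊗ₜ[ℂ] (1 : A))

/-!
A connection `∇` is the same thing as the splitting `ℓ = ∇ + (· ⊗ 1)` of the multiplication
`m : E ⊗_ℂ A → E`: `m ∘ ∇ = 0` becomes `m ∘ ℓ = id`, and the Leibniz rule becomes right
`A`-linearity of `ℓ`. As `E` is free over `ℂ`, `E ⊗_ℂ A` is a free right `A`-module, so a splitting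
exhibits `E` as a direct summand of a free module. Conversely, if `E` is projective, the
surjection `A^(E) → E` splits, and composing the splitting with `A^(E) → E ⊗_ℂ A`,
`e_η a ↦ η ⊗ a`, splits `m`.
-/

open MulOpposite

set_option linter.unusedSectionVars false

@[simp] lemma actMap_tmul (η : E) (a : A) : actMap (η ⊗ₜ[ℂ] a) = op a • η := rfl

@[simp] lemma rmulT_tmul (a : A) (η : E) (b : A) :
    rmulT a (η ⊗ₜ[ℂ] b) = η ⊗ₜ[ℂ] (b * a) := rfl

noncomputable def inclOne : E →ₗ[ℂ] E ⊗[ℂ] A := (TensorProduct.mk ℂ E A).flip 1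

@[simp] lemma inclOne_apply (η : E) : inclOne η = η ⊗ₜ[ℂ] (1 : A) := rfl

def IsRightSplitting (ℓ : E →ₗ[ℂ] E ⊗[ℂ] A) : Prop :=
  (∀ η : E, actMap (ℓ η) = η) ∧ ∀ (η : E) (a : A), ℓ (op a • η) = rmulT a (ℓ η)

theorem isConnection_iff_isRightSplitting_add_inclOne (Nab : E →ₗ[ℂ] E ⊗[ℂ] A) :
    IsConnection Nab ↔ IsRightSplitting (Nab + inclOne) := by
  refine and_congr (forall_congr' fun η => ?_) (forall₂_congr fun η a => ?_)
  · simp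
  · simp only [LinearMap.add_apply, inclOne_apply, map_add, rmulT_tmul, one_mul]
    constructor <;> intro h
    · rw [h]; abel
    · rw [← sub_eq_of_eq_add h.symm]; abel

section FreeOverBase

variable {ι : Type*} [DecidableEq ι] (B : Module.Basis ι ℂ E)

noncomputable def tensorToFinsupp : E ⊗[ℂ] A →ₗ[ℂ] (ι →₀ Aᵐᵒᵖ) :=
  Finsupp.mapRange.linearMap (opLinearEquiv ℂ).toLinearMap ∘ₗ
    (TensorProduct.finsuppScalarLeft ℂ A ι).toLinearMap ∘ₗ LinearMap.rTensor A B.repr.toLinearMap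

@[simp] lemma tensorToFinsupp_basis_tmul (i : ι) (a : A) :
    tensorToFinsupp B (B i ⊗ₜ[ℂ] a) = Finsupp.single i (op a) := by
  simp [tensorToFinsupp, TensorProduct.finsuppScalarLeft_apply_tmul]

theorem linearCombination_tensorToFinsupp (t : E ⊗[ℂ] A) :
    Finsupp.linearCombination Aᵐᵒᵖ B (tensorToFinsupp B t) = actMap t := by
  have : (Finsupp.linearCombination Aᵐᵒᵖ B).restrictScalars ℂ ∘ₗ tensorToFinsupp B = actMap :=
    TensorProduct.ext (B.ext fun i => LinearMap.ext fun a => by simp)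
  exact LinearMap.congr_fun this t

theorem tensorToFinsupp_rmulT (a : A) (t : E ⊗[ℂ] A) :
    tensorToFinsupp B (rmulT a t) = op a • tensorToFinsupp B t := by
  have : tensorToFinsupp B ∘ₗ rmulT a =
      DistribSMul.toLinearMap ℂ (ι →₀ Aᵐᵒᵖ) (op a) ∘ₗ tensorToFinsupp B :=
    TensorProduct.ext (B.ext fun i => LinearMap.ext fun b => by simp [-Finsupp.single_mul])
  exact LinearMap.congr_fun this t

end FreeOverBase

theorem IsRightSplitting.projective {ℓ : E →ₗ[ℂ] E ⊗[ℂ] A} (hℓ : IsRightSplitting ℓ) :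
    Module.Projective Aᵐᵒᵖ E := by
  classical
  let B := Module.Free.chooseBasis ℂ E
  let s : E →ₗ[Aᵐᵒᵖ] (Module.Free.ChooseBasisIndex ℂ E →₀ Aᵐᵒᵖ) :=
    { toFun := fun η => tensorToFinsupp B (ℓ η)
      map_add' := fun _ _ => by simp
      map_smul' := fun a η => by
        change tensorToFinsupp B (ℓ (op a.unop • η)) = a • tensorToFinsupp B (ℓ η)
        rw [hℓ.2, tensorToFinsupp_rmulT, op_unop] }
  refine .of_split s (Finsupp.linearCombination Aᵐᵒᵖ B) (LinearMap.ext fun η => ?_)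
  simp [s, linearCombination_tensorToFinsupp, hℓ.1]

section FinsuppToTensor

variable {ι : Type*} (v : ι → E)

noncomputable def finsuppToTensor : (ι →₀ Aᵐᵒᵖ) →ₗ[ℂ] E ⊗[ℂ] A :=
  Finsupp.lsum ℂ fun i => TensorProduct.mk ℂ E A (v i) ∘ₗ (opLinearEquiv ℂ).symm.toLinearMap

@[simp] lemma finsuppToTensor_single (i : ι) (a : Aᵐᵒᵖ) :
    finsuppToTensor v (Finsupp.single i a) = v i ⊗ₜ[ℂ] a.unop := by
  simp [finsuppToTensor]

theorem actMap_finsuppToTensor (g : ι →₀ Aᵐᵒᵖ) :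
    actMap (finsuppToTensor v g) = Finsupp.linearCombination Aᵐᵒᵖ v g := by
  induction g using Finsupp.induction_linear with
  | zero => simp
  | add f g hf hg => simp [hf, hg]
  | single i a => simp

theorem finsuppToTensor_op_smul (a : A) (g : ι →₀ Aᵐᵒᵖ) :
    finsuppToTensor v (op a • g) = rmulT a (finsuppToTensor v g) := by
  induction g using Finsupp.induction_linear with
  | zero => simp
  | add f g hf hg => simp [hf, hg]
  | single i b => simp [Finsupp.smul_single, -Finsupp.single_mul]

end FinsuppToTensor

theorem exists_isRightSplitting_of_projective [Module.Projective Aᵐᵒᵖ E] :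
    ∃ ℓ : E →ₗ[ℂ] E ⊗[ℂ] A, IsRightSplitting ℓ := by
  obtain ⟨s, hs⟩ := Module.projective_def.mp ‹Module.Projective Aᵐᵒᵖ E›
  refine ⟨finsuppToTensor id ∘ₗ s.restrictScalars ℂ, fun η => ?_, fun η a => ?_⟩
  · simpa [actMap_finsuppToTensor] using hs η
  · simp [finsuppToTensor_op_smul]

/-- A right module over a unital algebra admits a (universal) connection if and only if it
is projective. -/
theorem connection_iff_projective :
    (∃ Nab : E →ₗ[ℂ] E ⊗[ℂ] A, IsConnection Nab) ↔ Module.Projective Aᵐᵒᵖ E := by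
  calc (∃ Nab : E →ₗ[ℂ] E ⊗[ℂ] A, IsConnection Nab)
      ↔ ∃ ℓ : E →ₗ[ℂ] E ⊗[ℂ] A, IsRightSplitting ℓ := by
        simp only [isConnection_iff_isRightSplitting_add_inclOne]
        exact ⟨fun ⟨_, h⟩ => ⟨_, h⟩, fun ⟨ℓ, h⟩ => ⟨ℓ - inclOne, by rwa [sub_add_cancel]⟩⟩
    _ ↔ Module.Projective Aᵐᵒᵖ E :=
        ⟨fun ⟨_, hℓ⟩ => hℓ.projective, fun _ => exists_isRightSplitting_of_projective⟩
end

section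
/- If E is a Hilbert C*-module over a unital C*-algebra A such that the identity operator 1_E is a compact endomorphism (lies in the closed span of the rank-one operators |ξ⟩⟨ζ|), then the underlying right A-module E is finitely generated projective. -/
/-- If `E` is a Hilbert C*-module over a unital C*-algebra `A` such that the identity
operator is a compact endomorphism (it lies in the norm closure of the span of the
rank-one operators `|ξ⟩⟨ζ| : v ↦ ξ ⟨ζ, v⟩`), then the underlying right `A`-module `E`
is finitely generated and projective. -/
theorem hilbertModule_compact_one_finite_projective {A E : Type*}
    [NormedRing A] [StarRing A] [CStarRing A] [CompleteSpace A]
    [NormedAlgebra ℂ A] [StarModule ℂ A]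
    [NormedAddCommGroup E] [CompleteSpace E] [Module Aᵐᵒᵖ E]
    (ip : E → E → A)
    (hadd : ∀ η ξ₁ ξ₂ : E, ip η (ξ₁ + ξ₂) = ip η ξ₁ + ip η ξ₂)
    (hsmul : ∀ (η ξ : E) (a : A), ip η (MulOpposite.op a • ξ) = ip η ξ * a)
    (hstar : ∀ η ξ : E, star (ip η ξ) = ip ξ η)
    (hnorm : ∀ η : E, ‖η‖ = Real.sqrt ‖ip η η‖)
    (hcpt : ∀ ε : ℝ, 0 < ε → ∃ (n : ℕ) (ξ ζ : Fin n → E),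
      ∀ v : E, ‖v - ∑ k, MulOpposite.op (ip (ζ k) v) • ξ k‖ ≤ ε * ‖v‖) :
    Module.Finite Aᵐᵒᵖ E ∧ Module.Projective Aᵐᵒᵖ E := by
  obtain ⟨n, ξ, ζ, hT⟩ := hcpt (1/2) (by norm_num)
  -- the "frame" maps exhibiting the near-identity operator
  let lam : E →ₗ[Aᵐᵒᵖ] (Fin n → Aᵐᵒᵖ) :=
    { toFun := fun v k => MulOpposite.op (ip (ζ k) v)
      map_add' := by
        intro x y; funext k
        show MulOpposite.op (ip (ζ k) (x + y))
          = MulOpposite.op (ip (ζ k) x) + MulOpposite.op (ip (ζ k) y)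
        rw [hadd]; rfl
      map_smul' := by
        intro c x; funext k
        show MulOpposite.op (ip (ζ k) (c • x)) = c • MulOpposite.op (ip (ζ k) x)
        conv_lhs => rw [← MulOpposite.op_unop c]
        rw [hsmul, smul_eq_mul, MulOpposite.op_mul, MulOpposite.op_unop] }
  let rho : (Fin n → Aᵐᵒᵖ) →ₗ[Aᵐᵒᵖ] E :=
    { toFun := fun c => ∑ k, c k • ξ k
      map_add' := by
        intro x y
        show ∑ k, (x + y) k • ξ k = ∑ k, x k • ξ k + ∑ k, y k • ξ k
        simp [add_smul, Finset.sum_add_distrib]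
      map_smul' := by
        intro b x
        show ∑ k, (b • x) k • ξ k = b • ∑ k, x k • ξ k
        simp [mul_smul, Finset.smul_sum] }
  let T : E →ₗ[Aᵐᵒᵖ] E := rho.comp lam
  have hTv : ∀ v : E, ‖v - T v‖ ≤ (1/2) * ‖v‖ := fun v => hT v
  -- injectivity of T
  have hinj : Function.Injective T := by
    intro a b hab
    have h0 : T (a - b) = 0 := by rw [map_sub, hab, sub_self]
    have h1 : ‖a - b‖ ≤ (1/2) * ‖a - b‖ := by
      have := hTv (a - b); rwa [h0, sub_zero] at this
    have h2 : ‖a - b‖ = 0 := by nlinarith [norm_nonneg (a - b)]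
    exact sub_eq_zero.mp (norm_eq_zero.mp h2)
  -- surjectivity of T via the Banach fixed point theorem
  have hsurj : Function.Surjective T := by
    intro y
    have : Nonempty E := ⟨0⟩
    set g : E → E := fun v => y + (v - T v) with hg
    have hlip : LipschitzWith (1/2 : NNReal) g := by
      apply LipschitzWith.of_dist_le_mul
      intro a b
      have h1 : g a - g b = (a - b) - T (a - b) := by
        simp only [hg, map_sub]; abel
      have hK : ((1/2 : NNReal) : ℝ) = 1/2 := by norm_num
      rw [dist_eq_norm, dist_eq_norm, h1, hK]
      exact hTv (a - b)
    have hc : ContractingWith (1/2 : NNReal) g := ⟨one_half_lt_one, hlip⟩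
    refine ⟨ContractingWith.fixedPoint g hc, ?_⟩
    set v := ContractingWith.fixedPoint g hc with hv
    have hfix : g v = v := hc.fixedPoint_isFixedPt
    have h3 : y + (v - T v) = v := hfix
    have h4 : y = v - (v - T v) := eq_sub_of_add_eq h3
    rw [sub_sub_cancel] at h4
    exact h4.symm
  -- E is a retract of (Aᵐᵒᵖ)ⁿ
  let e : E ≃ₗ[Aᵐᵒᵖ] E := LinearEquiv.ofBijective T ⟨hinj, hsurj⟩
  let s : E →ₗ[Aᵐᵒᵖ] (Fin n → Aᵐᵒᵖ) := lam.comp e.symm.toLinearMap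
  have hsplit : rho.comp s = LinearMap.id := by
    ext v
    have h1 : rho (lam (e.symm v)) = T (e.symm v) := rfl
    have h2 : T (e.symm v) = e (e.symm v) := rfl
    simp only [LinearMap.comp_apply, LinearEquiv.coe_toLinearMap, LinearMap.id_apply, s,
      h1, h2, LinearEquiv.apply_symm_apply]
  have hrho_surj : Function.Surjective rho := fun v =>
    ⟨s v, by have := congrArg (fun f => f v) hsplit; simpa using this⟩
  exact ⟨Module.Finite.of_surjective rho hrho_surj,
    Module.Projective.of_split s rho hsplit⟩
end

section
/- For the inductive system with connecting matrix T = [[1,1],[1,0]] (Fibonacci-type embeddings), the inductive limit of the positive cones ℕ⊕ℕ under T⁻ᵐ, viewed inside ℤ⊕ℤ, equals { (a,b) ∈ ℤ⊕ℤ : ((1+√5)/2)·a + b ≥ 0 }; that is, an integer pair (a,b) lies in some T⁻ᵐ(ℕ⊕ℕ) if and only if ((1+√5)/2)a + b ≥ 0 (with (a,b) ≠ 0 implying strict positivity wherever applicable). -/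
/-!
The linear forms `q ↦ φ q.1 + q.2` and `q ↦ ψ q.1 + q.2` are eigenvectors of the transpose of
`T = [[1,1],[1,0]]`, with eigenvalues `φ > 1` and `ψ ∈ (-1, 0)`. Hence `φ q.1 + q.2` keeps its
sign along the orbit `Tᵐ q`, which gives necessity, while `√5 (Tᵐ q).1 = φᵐ (φ q.1 + q.2) - ψᵐ (ψ q.1 + q.2)`
tends to `+∞` when `φ q.1 + q.2 > 0`, which gives sufficiency. Strictness is the irrationality of `φ`.
-/

open Filter Real goldenRatio

def fibStep (q : ℤ × ℤ) : ℤ × ℤ := (q.1 + q.2, q.1)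

theorem fibStep_iterate_succ_snd (q : ℤ × ℤ) (m : ℕ) :
    (fibStep^[m + 1] q).2 = (fibStep^[m] q).1 := by
  rw [Function.iterate_succ_apply']
  rfl

theorem mul_fibStep_iterate_fst_add_snd {R : Type*} [CommRing R] {c : R} (hc : c ^ 2 = c + 1)
    (q : ℤ × ℤ) (m : ℕ) :
    c * ((fibStep^[m] q).1 : R) + (fibStep^[m] q).2 = c ^ m * (c * q.1 + q.2) := by
  induction m with
  | zero => simp
  | succ m ih =>
    rw [Function.iterate_succ_apply', pow_succ', mul_assoc, ← ih]
    simp only [fibStep, Int.cast_add]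
    linear_combination (-((fibStep^[m] q).1 : R)) * hc

theorem sqrt_five_mul_fibStep_iterate_fst (q : ℤ × ℤ) (m : ℕ) :
    √5 * (fibStep^[m] q).1 = φ ^ m * (φ * q.1 + q.2) - ψ ^ m * (ψ * q.1 + q.2) := by
  rw [← goldenRatio_sub_goldenConj]
  linear_combination mul_fibStep_iterate_fst_add_snd goldenRatio_sq q m -
    mul_fibStep_iterate_fst_add_snd goldenConj_sq q m

theorem tendsto_fibStep_iterate_fst (q : ℤ × ℤ) (hq : 0 < φ * q.1 + q.2) :
    Tendsto (fun m ↦ ((fibStep^[m] q).1 : ℝ)) atTop atTop := by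
  have hψ : |ψ| < 1 := abs_lt.2 ⟨neg_one_lt_goldenConj, goldenConj_neg.trans one_pos⟩
  have hgrow : Tendsto (fun m : ℕ ↦ φ ^ m * (φ * q.1 + q.2)) atTop atTop :=
    (tendsto_pow_atTop_atTop_of_one_lt one_lt_goldenRatio).atTop_mul_const hq
  have hdecay : Tendsto (fun m : ℕ ↦ ψ ^ m * (ψ * q.1 + q.2)) atTop (nhds 0) := by
    simpa using (tendsto_pow_atTop_nhds_zero_of_abs_lt_one hψ).mul_const (ψ * q.1 + q.2 : ℝ)
  have hsqrt5 : (0 : ℝ) < √5 := by positivity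
  have := (hgrow.atTop_add hdecay.neg).atTop_div_const hsqrt5
  refine this.congr fun m ↦ ?_
  rw [← sub_eq_add_neg, ← sqrt_five_mul_fibStep_iterate_fst, mul_div_cancel_left₀ _ hsqrt5.ne']

theorem exists_fibStep_iterate_nonneg (q : ℤ × ℤ) (hq : 0 < φ * q.1 + q.2) :
    ∃ m, 0 ≤ (fibStep^[m] q).1 ∧ 0 ≤ (fibStep^[m] q).2 := by
  obtain ⟨N, hN⟩ := eventually_atTop.1 ((tendsto_fibStep_iterate_fst q hq).eventually_ge_atTop 0)
  refine ⟨N + 1, ?_, ?_⟩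
  · exact_mod_cast hN (N + 1) N.le_succ
  · rw [fibStep_iterate_succ_snd]
    exact_mod_cast hN N le_rfl

theorem nonneg_of_fibStep_iterate_nonneg (q : ℤ × ℤ) (m : ℕ) (h₁ : 0 ≤ (fibStep^[m] q).1)
    (h₂ : 0 ≤ (fibStep^[m] q).2) : 0 ≤ φ * q.1 + q.2 := by
  have h : 0 ≤ φ ^ m * (φ * q.1 + q.2) := by
    rw [← mul_fibStep_iterate_fst_add_snd goldenRatio_sq]
    have : (0 : ℝ) ≤ (fibStep^[m] q).1 := by exact_mod_cast h₁
    have : (0 : ℝ) ≤ (fibStep^[m] q).2 := by exact_mod_cast h₂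
    positivity
  exact nonneg_of_mul_nonneg_right h (pow_pos goldenRatio_pos m)

theorem goldenRatio_mul_add_ne_zero {a b : ℤ} (hab : ¬(a = 0 ∧ b = 0)) :
    φ * a + b ≠ 0 := by
  by_cases ha : a = 0
  · simp_all
  · exact ((goldenRatio_irrational.mul_intCast ha).add_intCast b).ne_zero

/-- For the Fibonacci-type connecting map `T(a,b) = (a+b, a)` on `ℤ ⊕ ℤ`, an integer pair
`(a,b)` lies in `T⁻ᵐ(ℕ ⊕ ℕ)` for some `m` (equivalently `Tᵐ(a,b)` has nonnegative
entries) if and only if `((1+√5)/2)·a + b ≥ 0`; moreover for `(a,b) ≠ 0` the inequality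
is automatically strict.  This computes `K₀₊` of the AF-algebra of the Penrose tiling. -/
theorem penrose_positive_cone (a b : ℤ) :
    ((∃ m : ℕ, 0 ≤ ((fun q : ℤ × ℤ => (q.1 + q.2, q.1))^[m] (a, b)).1 ∧
        0 ≤ ((fun q : ℤ × ℤ => (q.1 + q.2, q.1))^[m] (a, b)).2) ↔
      0 ≤ (1 + Real.sqrt 5) / 2 * (a : ℝ) + (b : ℝ)) ∧
    (¬(a = 0 ∧ b = 0) → 0 ≤ (1 + Real.sqrt 5) / 2 * (a : ℝ) + (b : ℝ) →
      0 < (1 + Real.sqrt 5) / 2 * (a : ℝ) + (b : ℝ)) := by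
  change ((∃ m, 0 ≤ (fibStep^[m] (a, b)).1 ∧ 0 ≤ (fibStep^[m] (a, b)).2) ↔
    0 ≤ φ * a + b) ∧ (¬(a = 0 ∧ b = 0) → 0 ≤ φ * a + b → 0 < φ * a + b)
  have strict : ¬(a = 0 ∧ b = 0) → 0 ≤ φ * a + b → 0 < φ * a + b := fun hab h ↦
    h.lt_of_ne' (goldenRatio_mul_add_ne_zero hab)
  refine ⟨⟨fun ⟨m, h₁, h₂⟩ ↦ nonneg_of_fibStep_iterate_nonneg (a, b) m h₁ h₂, fun h ↦ ?_⟩, strict⟩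
  by_cases hab : a = 0 ∧ b = 0
  · exact ⟨0, by simp [hab]⟩
  · exact exists_fibStep_iterate_nonneg (a, b) (strict hab h)
end
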